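/- Let r be a positive integer and suppose there is a path in the Remmel–Whitney quiver made up of two arrows, a_{T1} : (α1,α2) → (λ1,λ2) satisfying the r-th row rule followed by a_{T2} : (λ1,λ2) → (β1,β2) satisfying the reverse r-th row rule. Then a_{T1} and a_{T2} are composable: their composition tableau T is a standard tableau of shape β1/α1 belonging to RW_{β1/α1}(α2/β2), so a_T : (α1,α2) → (β1,β2) is an arrow of the quiver. -/

import Mathlib

/- Common combinatorial infrastructure: skew shapes, standard fillings,
   Remmel–Whitney sets, Littlewood–Richardson coefficients, Schur functions,
   the Remmel–Whitney quiver and its row-rule subquivers, jeu-de-taquin,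
   infusion, RS correspondence and diffusion. -/

open scoped Classical BigOperators

noncomputable section

/-- Pairs of partitions (vertices of the quivers). -/
abbrev PP := YoungDiagram × YoungDiagram

namespace RW

/-- Cells of the skew shape `ν/μ`. -/
def SkewCells (ν μ : YoungDiagram) : Finset (ℕ × ℕ) := ν.cells \ μ.cells

/-- `f` is a standard filling of the skew shape `ν/μ`: it vanishes off the skew cells,
restricts to a bijection from the skew cells to `{1, …, n}` where `n` is the number of cells,
and is strictly increasing along rows and down columns. -/
def IsStdFilling (ν μ : YoungDiagram) (f : ℕ × ℕ → ℕ) : Prop :=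
  (∀ c, c ∉ SkewCells ν μ → f c = 0) ∧
  Set.BijOn f (SkewCells ν μ : Set (ℕ × ℕ)) (Set.Icc 1 (SkewCells ν μ).card) ∧
  (∀ i j : ℕ, (i, j) ∈ SkewCells ν μ → (i, j + 1) ∈ SkewCells ν μ → f (i, j) < f (i, j + 1)) ∧
  (∀ i j : ℕ, (i, j) ∈ SkewCells ν μ → (i + 1, j) ∈ SkewCells ν μ → f (i, j) < f (i + 1, j))

/-- Position (cell) of the label `l` in a filling `f` (junk value if no such cell). -/
def posOf (f : ℕ × ℕ → ℕ) (l : ℕ) : ℕ × ℕ :=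
  if h : ∃ c, f c = l then h.choose else (0, 0)

/-- The reverse lexicographic filling of the skew shape `ν/μ`: the numbers `1, …, n` are
entered from right to left along rows, from top row to bottom row. -/
def rlFill (ν μ : YoungDiagram) : ℕ × ℕ → ℕ := fun c =>
  if c ∈ SkewCells ν μ then
    1 + ((SkewCells ν μ).filter (fun c' => c'.1 < c.1 ∨ (c'.1 = c.1 ∧ c.2 < c'.2))).card
  else 0

/-- The Remmel–Whitney set `RW_{ν/μ}(g1/g2)`: standard skew tableaux of shape `ν/μ` such that
(i) if `i+1` is immediately to the left of `i` in `rl(g1/g2)` (same row), then in `T` the label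
`i+1` is strictly to the right of and weakly above `i`; (ii) if `i` is directly above `j` in
`rl(g1/g2)`, then in `T` the label `j` is strictly below and weakly to the left of `i`. -/
def RWSet (ν μ g1 g2 : YoungDiagram) : Set (ℕ × ℕ → ℕ) :=
  {T | IsStdFilling ν μ T ∧
    (∀ i j : ℕ, (i, j) ∈ SkewCells g1 g2 → (i, j + 1) ∈ SkewCells g1 g2 →
      (posOf T (rlFill g1 g2 (i, j + 1))).2 < (posOf T (rlFill g1 g2 (i, j))).2 ∧
      (posOf T (rlFill g1 g2 (i, j))).1 ≤ (posOf T (rlFill g1 g2 (i, j + 1))).1) ∧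
    (∀ i j : ℕ, (i, j) ∈ SkewCells g1 g2 → (i + 1, j) ∈ SkewCells g1 g2 →
      (posOf T (rlFill g1 g2 (i, j))).1 < (posOf T (rlFill g1 g2 (i + 1, j))).1 ∧
      (posOf T (rlFill g1 g2 (i + 1, j))).2 ≤ (posOf T (rlFill g1 g2 (i, j))).2)}

/-! ### Littlewood–Richardson coefficients (via the classical LR rule) -/

/-- Semistandard filling of the skew shape `ν/μ` (positive entries, weakly increasing
along rows, strictly increasing down columns, zero off the shape). -/
def IsSSYT (ν μ : YoungDiagram) (f : ℕ × ℕ → ℕ) : Prop :=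
  (∀ c, c ∉ SkewCells ν μ → f c = 0) ∧
  (∀ c ∈ SkewCells ν μ, 1 ≤ f c) ∧
  (∀ i j : ℕ, (i, j) ∈ SkewCells ν μ → (i, j + 1) ∈ SkewCells ν μ → f (i, j) ≤ f (i, j + 1)) ∧
  (∀ i j : ℕ, (i, j) ∈ SkewCells ν μ → (i + 1, j) ∈ SkewCells ν μ → f (i, j) < f (i + 1, j))

/-- Cells weakly before `c` in the reverse reading order (right-to-left, top-to-bottom). -/
def prefixCells (ν μ : YoungDiagram) (c : ℕ × ℕ) : Finset (ℕ × ℕ) :=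
  (SkewCells ν μ).filter (fun c' => c'.1 < c.1 ∨ (c'.1 = c.1 ∧ c.2 ≤ c'.2))

/-- Number of entries equal to `k` among the cells `s`. -/
def cnt (f : ℕ × ℕ → ℕ) (s : Finset (ℕ × ℕ)) (k : ℕ) : ℕ :=
  (s.filter (fun c => f c = k)).card

/-- Littlewood–Richardson filling of `ν/μ` of content `β`: semistandard, content `β`,
and every prefix of the reverse reading word is a lattice word. -/
def IsLRFilling (ν μ β : YoungDiagram) (f : ℕ × ℕ → ℕ) : Prop :=
  IsSSYT ν μ f ∧
  (∀ k : ℕ, cnt f (SkewCells ν μ) (k + 1) = β.rowLen k) ∧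
  (∀ c ∈ SkewCells ν μ, ∀ k : ℕ,
    cnt f (prefixCells ν μ c) (k + 2) ≤ cnt f (prefixCells ν μ c) (k + 1))

/-- The Littlewood–Richardson coefficient `c^γ_{α β}` (structure constants of Schur
functions), defined by the Littlewood–Richardson rule. -/
def LRcoeff (γ α β : YoungDiagram) : ℕ :=
  Nat.card {f : ℕ × ℕ → ℕ // IsLRFilling γ α β f}

/-! ### The ring `Λ₁ ⊗ Λ₂` and Schur functions -/

/-- Elementary symmetric functions as the free generators of the ring of symmetric
functions `Λ = ℤ[e₁, e₂, …]`; the variable `X k` is `e_{k+1}`. -/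
def eVar (k : ℤ) : MvPolynomial ℕ ℤ :=
  if k = 0 then 1 else if 0 < k then MvPolynomial.X (k.toNat - 1) else 0

/-- The Schur function `s_λ ∈ Λ`, via the dual Jacobi–Trudi determinant. -/
def schurF (lam : YoungDiagram) : MvPolynomial ℕ ℤ :=
  Matrix.det (Matrix.of fun i j : Fin (lam.rowLen 0) =>
    eVar ((lam.colLen i : ℤ) + (j : ℤ) - (i : ℤ)))

/-- The ring `Λ₁ ⊗_ℤ Λ₂` of symmetric functions in two independent sets of variables. -/
abbrev SymAlg := MvPolynomial (ℕ ⊕ ℕ) ℤ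

/-- `s_{α₁,α₂} = s_{α₁}(x) ⬝ s_{α₂}(y) ∈ Λ₁ ⊗ Λ₂`. -/
def sP (v : PP) : SymAlg :=
  MvPolynomial.rename Sum.inl (schurF v.1) * MvPolynomial.rename Sum.inr (schurF v.2)

/-! ### The Remmel–Whitney quiver and row rules -/

/-- `T` indexes an arrow `a_T : v → u` of the Remmel–Whitney quiver `qRW`,
i.e. `T ∈ RW_{u₁/v₁}(v₂/u₂)` and the vertices are distinct (the quiver is graded
and homogeneous). -/
def IsQArrow (v u : PP) (T : ℕ × ℕ → ℕ) : Prop :=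
  v ≠ u ∧ v.1.cells ⊆ u.1.cells ∧ u.2.cells ⊆ v.2.cells ∧
  (SkewCells u.1 v.1).card = (SkewCells v.2 u.2).card ∧
  T ∈ RWSet u.1 v.1 v.2 u.2

/-- The `r`-th row rule filling entry of the (ambient) box `c`:
`r` in the top-left box, decreasing by 1 along rows, increasing by 1 down columns. -/
def rowRuleEntry (r : ℕ) (c : ℕ × ℕ) : ℤ := (r : ℤ) + (c.1 : ℤ) - (c.2 : ℤ)

/-- The `r`-th row rule for a tableau `T` governed by the skew shape `g1/g2`:
every label appears in `T` in its assigned minimum row or lower (rows are 1-indexed). -/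
def RowCond (r : ℕ) (g1 g2 : YoungDiagram) (T : ℕ × ℕ → ℕ) : Prop :=
  ∀ c ∈ SkewCells g1 g2,
    rowRuleEntry r c ≤ ((posOf T (rlFill g1 g2 c)).1 + 1 : ℤ)

/-- The reverse `r`-th row rule: every label appears strictly above its assigned row. -/
def RevRowCond (r : ℕ) (g1 g2 : YoungDiagram) (T : ℕ × ℕ → ℕ) : Prop :=
  ∀ c ∈ SkewCells g1 g2,
    ((posOf T (rlFill g1 g2 c)).1 + 1 : ℤ) < rowRuleEntry r c

/-- Arrows of `qRW` satisfying the `r`-th row rule (`Arr^{≤ r}`). -/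
def IsArrLe (r : ℕ) (v u : PP) (T : ℕ × ℕ → ℕ) : Prop :=
  IsQArrow v u T ∧ RowCond r v.2 u.2 T

/-- Arrows of `qRW` satisfying the reverse `r`-th row rule (`Arr^{> r}`). -/
def IsArrGt (r : ℕ) (v u : PP) (T : ℕ × ℕ → ℕ) : Prop :=
  IsQArrow v u T ∧ RevRowCond r v.2 u.2 T

/-- Alternative indexing (`Arr-bar`): an arrow `ā_T : v → u` for each
`T ∈ RW_{v₂/u₂}(u₁/v₁)`. -/
def IsBarQArrow (v u : PP) (T : ℕ × ℕ → ℕ) : Prop :=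
  v ≠ u ∧ v.1.cells ⊆ u.1.cells ∧ u.2.cells ⊆ v.2.cells ∧
  (SkewCells u.1 v.1).card = (SkewCells v.2 u.2).card ∧
  T ∈ RWSet v.2 u.2 u.1 v.1

/-- Row rule for `Arr-bar`: for every label `l` of `T`, the row-rule entry `R_l` of the
box of `v₂/u₂` occupied by `l` is at most the row `k_l` of `l` in `rl(u₁/v₁)`. -/
def BarRowCond (r : ℕ) (v u : PP) (T : ℕ × ℕ → ℕ) : Prop :=
  ∀ c ∈ SkewCells v.2 u.2,
    rowRuleEntry r c ≤ ((posOf (rlFill u.1 v.1) (T c)).1 + 1 : ℤ)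

/-- Reverse row rule for `Arr-bar`: `R_l > k_l` for all labels `l`. -/
def BarRevRowCond (r : ℕ) (v u : PP) (T : ℕ × ℕ → ℕ) : Prop :=
  ∀ c ∈ SkewCells v.2 u.2,
    ((posOf (rlFill u.1 v.1) (T c)).1 + 1 : ℤ) < rowRuleEntry r c

/-- `Arr-bar^{≤ r}`. -/
def IsBarArrLe (r : ℕ) (v u : PP) (T : ℕ × ℕ → ℕ) : Prop :=
  IsBarQArrow v u T ∧ BarRowCond r v u T

/-- `Arr-bar^{> r}`. -/
def IsBarArrGt (r : ℕ) (v u : PP) (T : ℕ × ℕ → ℕ) : Prop :=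
  IsBarQArrow v u T ∧ BarRevRowCond r v u T

/-! ### Quiver bases of `Λ₁ ⊗ Λ₂` -/

/-- Auxiliary (fuel) recursion for the Remmel–Whitney basis:
`w_v = s_v − Σ_{arrows a rooted at v} w_{t(a)}`.  Since every arrow strictly
decreases `|v₂|`, fuel `|v₂|` computes the basis. -/
def wAux : ℕ → PP → SymAlg
  | 0, v => sP v
  | m + 1, v =>
      sP v - ∑ᶠ u : PP, ∑ᶠ _T ∈ {T : ℕ × ℕ → ℕ | IsQArrow v u T}, wAux m u

/-- The Remmel–Whitney basis `w_{α₁,α₂}` of `Λ₁ ⊗ Λ₂`. -/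
def wB (v : PP) : SymAlg := wAux v.2.card v

/-- Fuel recursion for the basis of the subquiver `qRW^r`. -/
def tauAux (r : ℕ) : ℕ → PP → SymAlg
  | 0, v => sP v
  | m + 1, v =>
      sP v - ∑ᶠ u : PP, ∑ᶠ _T ∈ {T : ℕ × ℕ → ℕ | IsArrLe r v u T}, tauAux r m u

/-- The basis `τ^r_{α₁,α₂}` of `Λ₁ ⊗ Λ₂` attached to the subquiver `qRW^r`. -/
def tauB (r : ℕ) (v : PP) : SymAlg := tauAux r v.2.card v

/-- Fuel recursion for the `qRW^r` basis in the alternative (`Arr-bar`) indexing. -/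
def tauBarAux (r : ℕ) : ℕ → PP → SymAlg
  | 0, v => sP v
  | m + 1, v =>
      sP v - ∑ᶠ u : PP, ∑ᶠ _T ∈ {T : ℕ × ℕ → ℕ | IsBarArrLe r v u T}, tauBarAux r m u

/-- The basis `τ^r_{α₁,α₂}` of `Λ₁ ⊗ Λ₂` (alternative arrow indexing). -/
def tauBarB (r : ℕ) (v : PP) : SymAlg := tauBarAux r v.2.card v

end RW

namespace RW

/-! ### Jeu-de-taquin -/

/-- One jeu-de-taquin slide with the gap at `g`: repeatedly move into the gap the smaller
of the two labels to the right of and below the gap, until both are absent (fuel recursion).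
Returns the new filling and the final position of the gap. -/
def slideFrom : ℕ → (ℕ × ℕ → ℕ) → ℕ × ℕ → ((ℕ × ℕ → ℕ) × (ℕ × ℕ))
  | 0, f, g => (f, g)
  | n + 1, f, g =>
    if f (g.1, g.2 + 1) = 0 ∧ f (g.1 + 1, g.2) = 0 then (f, g)
    else
      let c : ℕ × ℕ :=
        if f (g.1 + 1, g.2) = 0 ∨ (f (g.1, g.2 + 1) ≠ 0 ∧ f (g.1, g.2 + 1) < f (g.1 + 1, g.2))
        then (g.1, g.2 + 1) else (g.1 + 1, g.2)
      slideFrom n (Function.update (Function.update f g (f c)) c 0) c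

/-- A (not necessarily standard) skew tableau: an outer shape, an inner shape and a filling. -/
structure SkewT where
  outer : YoungDiagram
  inner : YoungDiagram
  entry : ℕ × ℕ → ℕ

/-- A standard skew tableau. -/
def IsStdSkewT (S : SkewT) : Prop :=
  S.inner.cells ⊆ S.outer.cells ∧ IsStdFilling S.outer S.inner S.entry

/-- `S'` is obtained from `S` by a single jeu-de-taquin slide into an inner corner. -/
def JdtStep (S S' : SkewT) : Prop :=
  ∃ c : ℕ × ℕ, c ∈ S.inner.cells ∧ (c.1 + 1, c.2) ∉ S.inner.cells ∧
    (c.1, c.2 + 1) ∉ S.inner.cells ∧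
    S'.entry = (slideFrom (S.outer.card + 1) S.entry c).1 ∧
    S'.inner.cells = S.inner.cells.erase c ∧
    S'.outer.cells = S.outer.cells.erase (slideFrom (S.outer.card + 1) S.entry c).2

/-- Jeu-de-taquin equivalence: the equivalence relation generated by single slides
(this allows sequences of slides into inner or outer corners). -/
def JdtEquiv : SkewT → SkewT → Prop := Relation.EqvGen JdtStep

/-- Rectification: a straight-shape tableau obtained from `S` by a sequence of
jeu-de-taquin slides into inner corners (by the fundamental theorem it is unique
for standard skew tableaux). -/
def Rect (S : SkewT) : SkewT :=
  if h : ∃ S', Relation.ReflTransGen JdtStep S S' ∧ S'.inner.cells = ∅ then h.choose else S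

/-- The Young diagram with cell set `s` (junk value `⊥` if `s` is not a lower set). -/
def ofCells (s : Finset (ℕ × ℕ)) : YoungDiagram :=
  if h : IsLowerSet (s : Set (ℕ × ℕ)) then ⟨s, h⟩ else ⊥

/-- The restriction `T^{≤ k}` of a standard skew tableau to the labels `{1, …, k}`. -/
def splitLe (S : SkewT) (k : ℕ) : SkewT where
  outer := ofCells (S.inner.cells ∪
    S.outer.cells.filter (fun c => 1 ≤ S.entry c ∧ S.entry c ≤ k))
  inner := S.inner
  entry := fun c => if 1 ≤ S.entry c ∧ S.entry c ≤ k then S.entry c else 0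

/-- The restriction `T^{> k}` of a standard skew tableau to the labels `{k+1, …, n}`,
with all labels decreased by `k`. -/
def splitGt (S : SkewT) (k : ℕ) : SkewT where
  outer := S.outer
  inner := ofCells (S.inner.cells ∪
    S.outer.cells.filter (fun c => 1 ≤ S.entry c ∧ S.entry c ≤ k))
  entry := fun c => if k < S.entry c then S.entry c - k else 0

/-! ### Infusion -/

/-- Auxiliary recursion for infusion: perform jeu-de-taquin slides on the first component
into the boxes of `T1` in decreasing order of the labels of `T1`, recording in the second
component the vacated outer corners (the corner vacated while sliding into the box of `T1`
labeled `i` gets the label `i`). -/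
def infuseAux (N : ℕ) (T1 : ℕ × ℕ → ℕ) :
    ℕ → ((ℕ × ℕ → ℕ) × (ℕ × ℕ → ℕ)) → ((ℕ × ℕ → ℕ) × (ℕ × ℕ → ℕ))
  | 0, p => p
  | i + 1, p =>
    if ∃ c, T1 c = i + 1 then
      let res := slideFrom N p.1 (posOf T1 (i + 1))
      infuseAux N T1 i (res.1, Function.update p.2 res.2 (i + 1))
    else infuseAux N T1 i p

/-- Infusion of `T2` (the outer tableau) past `T1` (the inner tableau with `n` boxes):
the first component is `Slide_{T1}(T2)` and the second is `Slide^{T2}(T1)`. -/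
def infuse (N n : ℕ) (T1 T2 : ℕ × ℕ → ℕ) : (ℕ × ℕ → ℕ) × (ℕ × ℕ → ℕ) :=
  infuseAux N T1 n (T2, fun _ => 0)

/-! ### The star operation `α*β` (for possibly skew shapes) -/

/-- Outer shape of `lo * up` (`up` is placed above and entirely to the right of `lo`),
where `lo = lo₁/lo₂` and `up = up₁/up₂` are skew shapes. -/
def starOuter (lo1 lo2 up1 up2 : YoungDiagram) : YoungDiagram :=
  ofCells ((Finset.range (up1.colLen 0) ×ˢ Finset.range (lo1.rowLen 0)) ∪
    up1.cells.image (fun c => (c.1, c.2 + lo1.rowLen 0)) ∪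
    lo1.cells.image (fun c => (c.1 + up1.colLen 0, c.2)))

/-- Inner shape of `lo * up`. -/
def starInner (lo1 lo2 up1 up2 : YoungDiagram) : YoungDiagram :=
  ofCells ((Finset.range (up1.colLen 0) ×ˢ Finset.range (lo1.rowLen 0)) ∪
    up2.cells.image (fun c => (c.1, c.2 + lo1.rowLen 0)) ∪
    lo2.cells.image (fun c => (c.1 + up1.colLen 0, c.2)))

/-! ### Reading words, Robinson–Schensted and diffusion -/

/-- The reading word of a filling of the skew shape `ν/μ`: labels are read from top to
bottom and right to left. -/
def readingWordOf (ν : YoungDiagram) (f : ℕ × ℕ → ℕ) : List ℕ :=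
  (List.range (ν.colLen 0)).flatMap (fun i =>
    (((List.range (ν.rowLen i)).reverse).map (fun j => f (i, j))).filter (fun v => v != 0))

/-- The inverse of a permutation word (a word `w` listing `1, …, n` in some order). -/
def invWord (w : List ℕ) : List ℕ :=
  (List.range w.length).map (fun i => w.idxOf (i + 1) + 1)

/-- The filling of the skew shape `ν/μ` whose reading word is `w`. -/
def fillByWord (ν μ : YoungDiagram) (w : List ℕ) : ℕ × ℕ → ℕ := fun c =>
  if c ∈ SkewCells ν μ then w.getD (rlFill ν μ c - 1) 0 else 0

/-- Reverse column insertion: bump the value `v` leftwards through columns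
`j-1, j-2, …, 0`, at each step replacing the largest entry smaller than the carried value;
returns the final filling and the expelled letter. -/
def revBump (N : ℕ) : ℕ → (ℕ × ℕ → ℕ) → ℕ → ((ℕ × ℕ → ℕ) × ℕ)
  | 0, f, v => (f, v)
  | j + 1, f, v =>
    let s := (Finset.range N).filter (fun i => 0 < f (i, j) ∧ f (i, j) < v)
    if h : s.Nonempty then
      revBump N j (Function.update f (s.max' h, j) v) (f (s.max' h, j))
    else (f, v)

/-- The inverse Robinson–Schensted correspondence (via reverse column insertion):
given an insertion tableau `P` and a recording tableau `Q` with `m` labels, produce the word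
`(a_1, …, a_m)`; the label `m` of `Q` is removed first, expelling `a_m`, and so on. -/
def RSinvWord (N : ℕ) : ℕ → (ℕ × ℕ → ℕ) → (ℕ × ℕ → ℕ) → List ℕ
  | 0, _, _ => []
  | m + 1, P, Q =>
    if ∃ c, Q c = m + 1 then
      let c := posOf Q (m + 1)
      let rb := revBump N c.2 (Function.update P c 0) (P c)
      RSinvWord N m rb.1 Q ++ [rb.2]
    else RSinvWord N m P Q ++ [0]

/-- `θ⁻¹(P, Q)` for the skew shape `ν/μ`: the filling of `ν/μ` by the word `RS⁻¹(P, Q)`. -/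
def thetaInv (ν μ : YoungDiagram) (P Q : ℕ × ℕ → ℕ) : ℕ × ℕ → ℕ :=
  fillByWord ν μ (RSinvWord ((SkewCells ν μ).card + 1) (SkewCells ν μ).card P Q)

/-- The unique element of `RW(δ)` for a straight shape `δ`: row `i` carries the labels
`δ₁ + ⋯ + δ_i + 1, …, δ₁ + ⋯ + δ_{i+1}` in increasing order. -/
def uElem (δ : YoungDiagram) : ℕ × ℕ → ℕ := fun c =>
  if c ∈ δ.cells then (Finset.range c.1).sum δ.rowLen + c.2 + 1 else 0

/-! ### Vertical strips -/

/-- `ν/μ` is a vertical strip of length `q` (no two boxes in the same row). -/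
def IsVStripOf (ν μ : YoungDiagram) (q : ℕ) : Prop :=
  μ.cells ⊆ ν.cells ∧ (SkewCells ν μ).card = q ∧
  ∀ c ∈ SkewCells ν μ, ∀ c' ∈ SkewCells ν μ, c ≠ c' → c.1 ≠ c'.1

/-- The standard tableau `T_{ν/μ}` on a vertical strip `ν/μ`, labeled `1, …, q`
from top to bottom. -/
def vstripTab (ν μ : YoungDiagram) : ℕ × ℕ → ℕ := fun c =>
  if c ∈ SkewCells ν μ then 1 + ((SkewCells ν μ).filter (fun c' => c'.1 < c.1)).card else 0

/-- The column partition `1^p`. -/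
def colDiagram (p : ℕ) : YoungDiagram :=
  ofCells (Finset.range p ×ˢ ({0} : Finset ℕ))

/-! ### Diffusion and the arrows `Diff_T(a_U)` -/

/-- Given `T ∈ RW_γ(β*α₂)` and `U ∈ RW_{γ/λ₂}(λ₁/α₁)` (an arrow of `Arr-bar` rooted at
`(α₁,γ)`), the filling `W` of the skew shape `β*α₂` produced by diffusion: extend `U` by the
unique element of `RW(λ₂)` to a straight tableau `Ũ` of shape `γ` and apply `θ⁻¹(Ũ, T)`. -/
def diffFill (α2 β : YoungDiagram) (T U : ℕ × ℕ → ℕ) (lam2 : YoungDiagram) : ℕ × ℕ → ℕ :=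
  let k := lam2.card
  let Ut : ℕ × ℕ → ℕ := fun c =>
    if c ∈ lam2.cells then uElem lam2 c else if U c ≠ 0 then U c + k else 0
  thetaInv (starOuter β ⊥ α2 ⊥) (starInner β ⊥ α2 ⊥) Ut T

/-- The arrow `Diff_T(a_U)` rooted at `(α₁,α₂)` satisfies the reverse `r`-th row rule
(the trivial arrow counts as satisfying it, vacuously):
the part of `W^{> |λ₂|}` occupying the `α₂`-region of `β*α₂` defines a tableau of shape
`α₂/ν₂` (labels renumbered), governed by `ν₁/α₁`, and every label lies strictly above its
assigned row. -/
def DiffArrowRev (r : ℕ) (α1 α2 β : YoungDiagram) (T : ℕ × ℕ → ℕ) (u : PP)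
    (U : ℕ × ℕ → ℕ) : Prop :=
  let w0 := β.rowLen 0
  let k := u.2.card
  let W := diffFill α2 β T U u.2
  let A := (SkewCells (starOuter β ⊥ α2 ⊥) (starInner β ⊥ α2 ⊥)).filter
    (fun c => w0 ≤ c.2 ∧ k < W c)
  let L := A.image (fun c => W c - k)
  let ν1 := ofCells (α1.cells ∪ (SkewCells u.1 α1).filter (fun c => rlFill u.1 α1 c ∈ L))
  let V : ℕ × ℕ → ℕ := fun c =>
    if (c.1, c.2 + w0) ∈ A then (L.filter (fun x => x ≤ W (c.1, c.2 + w0) - k)).card else 0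
  ∀ c : ℕ × ℕ, (c.1, c.2 + w0) ∈ A →
    ((posOf (rlFill ν1 α1) (V c)).1 + 1 : ℤ) < rowRuleEntry r c

/-- The unique element of `RW_γ(1^p * α₂)` for `γ/α₂` a vertical strip: the `α₂`-cells
carry the unique element of `RW(α₂)` and the strip cells carry `|α₂| + T_{γ/α₂}`. -/
def starColTab (γ α2 : YoungDiagram) : ℕ × ℕ → ℕ := fun c =>
  if c ∈ α2.cells then uElem α2 c
  else if c ∈ SkewCells γ α2 then α2.card + vstripTab γ α2 c else 0

/-! ### Composition of arrows -/

/-- The composition tableau of `T1 ∈ RW_{λ₁/α₁}(α₂/λ₂)` and `T2 ∈ RW_{β₁/λ₁}(λ₂/β₂)`: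
a filling of `β₁/α₁`, where a box of `λ₁/α₁` with label `i` in `T1` receives the
`rl(α₂/β₂)`-label of the box of `α₂/λ₂` with `rl(α₂/λ₂)`-label `i`, and similarly for
boxes of `β₁/λ₁` using `T2` and `rl(λ₂/β₂)`. -/
def compTab (α1 lam1 β1 α2 lam2 β2 : YoungDiagram) (T1 T2 : ℕ × ℕ → ℕ) : ℕ × ℕ → ℕ :=
  fun c =>
    if c ∈ SkewCells lam1 α1 then rlFill α2 β2 (posOf (rlFill α2 lam2) (T1 c))
    else if c ∈ SkewCells β1 lam1 then rlFill α2 β2 (posOf (rlFill lam2 β2) (T2 c))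
    else 0

end RW

/-! The composition tableau is `rl(α₂/β₂)` transported along the bijection `β₁/α₁ → α₂/β₂` that
sends each box of `T₁` (resp. `T₂`) to the box of `α₂/λ₂` (resp. `λ₂/β₂`) whose `rl`-label it
carries. Standardness and the Remmel–Whitney conditions are inherited from `T₁` and `T₂` on each
half; what remains is a box `x` of `α₂/λ₂` interacting with a box `y` of `λ₂/β₂`. Along a row of
`α₂/λ₂` the labels of `T₁` move weakly down, so the row rule at the left end of the row of `x`
gives `row_{T₁}(x) ≥ r + x.1 - λ₂.rowLen x.1 - 1`; dually, the reverse row rule at the right end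
of the row of `y` gives `row_{T₂}(y) < r + y.1 - λ₂.rowLen y.1`. As `λ₂.rowLen` is antitone,
`row_{T₂}(y) + (x.1 - y.1) ≤ row_{T₁}(x)` whenever `y.1 ≤ x.1`, and this settles every mixed case
(rows are counted from `0` here). -/

theorem Set.BijOn.piecewise_union {α β : Type*} {f₁ f₂ : α → β} {s₁ s₂ : Set α}
    {t₁ t₂ : Set β} [∀ x, Decidable (x ∈ s₁)] (h₁ : Set.BijOn f₁ s₁ t₁) (h₂ : Set.BijOn f₂ s₂ t₂)
    (hs : Disjoint s₁ s₂) (ht : Disjoint t₁ t₂) :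
    Set.BijOn (s₁.piecewise f₁ f₂) (s₁ ∪ s₂) (t₁ ∪ t₂) := by
  have e₁ : Set.EqOn f₁ (s₁.piecewise f₁ f₂) s₁ := (Set.piecewise_eqOn _ _ _).symm
  have e₂ : Set.EqOn f₂ (s₁.piecewise f₁ f₂) s₂ :=
    ((Set.piecewise_eqOn_compl _ _ _).mono hs.subset_compl_left).symm
  refine (h₁.congr e₁).union (h₂.congr e₂) ((Set.injOn_union hs).2
    ⟨(h₁.congr e₁).injOn, (h₂.congr e₂).injOn, fun x hx y hy hxy => ?_⟩)
  exact Set.disjoint_left.1 ht ((h₁.congr e₁).mapsTo hx) (hxy ▸ (h₂.congr e₂).mapsTo hy)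

namespace RW

open Set

section SkewShapes

variable {κ μ ν : YoungDiagram}

lemma mem_skewCells {c : ℕ × ℕ} : c ∈ SkewCells ν μ ↔ c ∈ ν ∧ c ∉ μ := Finset.mem_sdiff

lemma mk_mem_skewCells {i j : ℕ} : (i, j) ∈ SkewCells ν μ ↔ μ.rowLen i ≤ j ∧ j < ν.rowLen i := by
  rw [mem_skewCells, YoungDiagram.mem_iff_lt_rowLen, YoungDiagram.mem_iff_lt_rowLen, not_lt,
    and_comm]

lemma skewCells_union (hκμ : κ.cells ⊆ μ.cells) (hμν : μ.cells ⊆ ν.cells) :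
    SkewCells ν μ ∪ SkewCells μ κ = SkewCells ν κ :=
  Finset.sdiff_union_sdiff_cancel hμν hκμ

lemma disjoint_skewCells : Disjoint (SkewCells ν μ) (SkewCells μ κ) :=
  Finset.disjoint_left.2 fun _ h h' => (mem_skewCells.1 h).2 (mem_skewCells.1 h').1

lemma card_skewCells_add (hκμ : κ.cells ⊆ μ.cells) (hμν : μ.cells ⊆ ν.cells) :
    (SkewCells ν μ).card + (SkewCells μ κ).card = (SkewCells ν κ).card := by
  rw [← skewCells_union hκμ hμν, Finset.card_union_of_disjoint disjoint_skewCells]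

lemma skewCells_nonempty_of_ne (hμν : μ.cells ⊆ ν.cells) (hne : μ ≠ ν) :
    (SkewCells ν μ).Nonempty := by
  rw [Finset.nonempty_iff_ne_empty, Ne, SkewCells, Finset.sdiff_eq_empty_iff_subset]
  exact fun hνμ => hne (YoungDiagram.ext (hμν.antisymm hνμ))

lemma not_le_of_mem_skewCells {x y : ℕ × ℕ} (hx : x ∈ SkewCells ν μ) (hy : y ∈ SkewCells μ κ) :
    ¬ x ≤ y := fun h =>
  (mem_skewCells.1 hx).2 (μ.up_left_mem (Prod.mk_le_mk.1 h).1 (Prod.mk_le_mk.1 h).2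
    (mem_skewCells.1 hy).1)

lemma snd_lt_snd_of_mem_of_notMem {p q : ℕ × ℕ} (hq : q ∈ μ) (hp : p ∉ μ) (h : p.1 ≤ q.1) :
    q.2 < p.2 := by
  by_contra! h'
  exact hp (μ.up_left_mem h h' hq)

end SkewShapes

lemma IsQArrow.skewCells_nonempty {v u : PP} {T : ℕ × ℕ → ℕ} (h : IsQArrow v u T) :
    (SkewCells u.1 v.1).Nonempty := by
  obtain ⟨hne, h₁, h₂, hcard, -⟩ := h
  by_cases heq : v.1 = u.1
  · rw [← Finset.card_pos, hcard, Finset.card_pos]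
    exact skewCells_nonempty_of_ne h₂ fun h => hne (Prod.ext heq h.symm)
  · exact skewCells_nonempty_of_ne h₁ heq

section Positions

variable {f : ℕ × ℕ → ℕ} {s : Set (ℕ × ℕ)}

lemma posOf_apply (hinj : InjOn f s) (hzero : ∀ c ∉ s, f c = 0) {c : ℕ × ℕ} (hc : c ∈ s)
    (hfc : f c ≠ 0) : posOf f (f c) = c := by
  have h : ∃ c', f c' = f c := ⟨c, rfl⟩
  rw [posOf, dif_pos h]
  refine hinj ?_ hc h.choose_spec
  by_contra hn
  exact hfc (h.choose_spec ▸ hzero _ hn)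

lemma invOn_posOf {t : Set ℕ} (hf : BijOn f s t) (hzero : ∀ c ∉ s, f c = 0) (ht : 0 ∉ t) :
    InvOn (posOf f) f s t := by
  have key : ∀ c ∈ s, posOf f (f c) = c := fun c hc =>
    posOf_apply hf.injOn hzero hc fun h => ht (h ▸ hf.mapsTo hc)
  refine ⟨key, fun l hl => ?_⟩
  obtain ⟨c, hc, rfl⟩ := hf.surjOn hl
  rw [key c hc]

end Positions

def ReadsBefore (c d : ℕ × ℕ) : Prop := c.1 < d.1 ∨ (c.1 = d.1 ∧ d.2 < c.2)

lemma ReadsBefore.trans {c d e : ℕ × ℕ} (h₁ : ReadsBefore c d) (h₂ : ReadsBefore d e) :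
    ReadsBefore c e := by
  unfold ReadsBefore at *; omega

lemma ReadsBefore.irrefl (c : ℕ × ℕ) : ¬ ReadsBefore c c := by
  unfold ReadsBefore; omega

lemma ReadsBefore.total {c d : ℕ × ℕ} (h : c ≠ d) : ReadsBefore c d ∨ ReadsBefore d c := by
  obtain ⟨a, b⟩ := c
  obtain ⟨a', b'⟩ := d
  simp only [Ne, Prod.mk.injEq] at h
  unfold ReadsBefore; omega

section ReverseLexicographic

variable {ν μ : YoungDiagram} {c d : ℕ × ℕ}

lemma rlFill_eq_zero (hc : c ∉ SkewCells ν μ) : rlFill ν μ c = 0 := if_neg hc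

lemma rlFill_of_mem (hc : c ∈ SkewCells ν μ) :
    rlFill ν μ c = 1 + ((SkewCells ν μ).filter (ReadsBefore · c)).card := by
  rw [rlFill, if_pos hc]
  exact congrArg _ (congrArg _ (Finset.filter_congr fun _ _ => Iff.rfl))

lemma rlFill_lt_rlFill (hc : c ∈ SkewCells ν μ) (hd : d ∈ SkewCells ν μ) (h : ReadsBefore c d) :
    rlFill ν μ c < rlFill ν μ d := by
  rw [rlFill_of_mem hc, rlFill_of_mem hd, add_lt_add_iff_left]
  refine Finset.card_lt_card ((Finset.ssubset_iff_of_subset ?_).2 ⟨c, ?_, ?_⟩)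
  · exact Finset.monotone_filter_right _ fun _ _ he => ReadsBefore.trans he h
  · exact Finset.mem_filter.2 ⟨hc, h⟩
  · exact fun h' => ReadsBefore.irrefl c (Finset.mem_filter.1 h').2

lemma rlFill_lt_rlFill_iff (hc : c ∈ SkewCells ν μ) (hd : d ∈ SkewCells ν μ) :
    rlFill ν μ c < rlFill ν μ d ↔ ReadsBefore c d := by
  refine ⟨fun h => ?_, rlFill_lt_rlFill hc hd⟩
  rcases eq_or_ne c d with rfl | hne
  · exact absurd h (lt_irrefl _)
  · exact (ReadsBefore.total hne).resolve_right fun h' => (rlFill_lt_rlFill hd hc h').not_gt h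

lemma rlFill_injOn : InjOn (rlFill ν μ) (SkewCells ν μ) := by
  intro c hc d hd h
  by_contra hne
  rcases ReadsBefore.total hne with h' | h'
  · exact (rlFill_lt_rlFill hc hd h').ne h
  · exact (rlFill_lt_rlFill hd hc h').ne' h

lemma rlFill_le_card (hc : c ∈ SkewCells ν μ) : rlFill ν μ c ≤ (SkewCells ν μ).card := by
  rw [rlFill_of_mem hc, ← Finset.card_erase_add_one hc, add_comm]
  refine Nat.add_le_add_right (Finset.card_le_card fun e he => ?_) 1
  obtain ⟨heS, hec⟩ := Finset.mem_filter.1 he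
  exact Finset.mem_erase.2 ⟨fun h => ReadsBefore.irrefl c (h ▸ hec), heS⟩

lemma rlFill_bijOn : BijOn (rlFill ν μ) (SkewCells ν μ) (Icc 1 (SkewCells ν μ).card) := by
  have hmaps : MapsTo (rlFill ν μ) (SkewCells ν μ) (Icc 1 (SkewCells ν μ).card) := fun c hc =>
    ⟨by rw [rlFill_of_mem hc]; omega, rlFill_le_card hc⟩
  refine ⟨hmaps, rlFill_injOn, ?_⟩
  rw [← Finset.coe_Icc] at hmaps ⊢
  exact Finset.surjOn_of_injOn_of_card_le _ hmaps rlFill_injOn (by simp)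

lemma invOn_posOf_rlFill :
    InvOn (posOf (rlFill ν μ)) (rlFill ν μ) (SkewCells ν μ) (Icc 1 (SkewCells ν μ).card) :=
  invOn_posOf rlFill_bijOn (fun _ => rlFill_eq_zero) (by simp)

end ReverseLexicographic

/-! A standard tableau `T` of shape `ν/μ`, governed by a skew shape `g₁/g₂` of the same size,
sends each of its boxes to the *governing* box of `g₁/g₂` with the same `rl`-label; the inverse
bijection `posOf T ∘ rlFill g₁ g₂` is the map in the Remmel–Whitney conditions. -/

section Governing

variable {ν μ g1 g2 : YoungDiagram} {T : ℕ × ℕ → ℕ}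

lemma IsStdFilling.invOn_posOf (hT : IsStdFilling ν μ T) :
    InvOn (posOf T) T (SkewCells ν μ) (Icc 1 (SkewCells ν μ).card) :=
  RW.invOn_posOf hT.2.1 hT.1 (by simp)

variable (hT : IsStdFilling ν μ T) (hcard : (SkewCells ν μ).card = (SkewCells g1 g2).card)
include hT hcard

lemma IsStdFilling.invOn_govern :
    InvOn (posOf T ∘ rlFill g1 g2) (posOf (rlFill g1 g2) ∘ T) (SkewCells ν μ) (SkewCells g1 g2) :=
  hT.invOn_posOf.comp (hcard ▸ invOn_posOf_rlFill.symm) hT.2.1.mapsTo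
    (hcard ▸ rlFill_bijOn.mapsTo)

lemma IsStdFilling.bijOn_govern :
    BijOn (posOf (rlFill g1 g2) ∘ T) (SkewCells ν μ) (SkewCells g1 g2) :=
  (BijOn.symm invOn_posOf_rlFill.symm rlFill_bijOn).comp (hcard ▸ hT.2.1)

lemma IsStdFilling.mapsTo_cell :
    MapsTo (posOf T ∘ rlFill g1 g2) (SkewCells g1 g2) (SkewCells ν μ) :=
  (BijOn.symm (hT.invOn_govern hcard).symm (hT.bijOn_govern hcard)).mapsTo

lemma IsStdFilling.rlFill_govern {c : ℕ × ℕ} (hc : c ∈ SkewCells ν μ) :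
    rlFill g1 g2 (posOf (rlFill g1 g2) (T c)) = T c :=
  invOn_posOf_rlFill.2 (hcard ▸ hT.2.1.mapsTo hc)

lemma IsStdFilling.readsBefore_govern {c c' : ℕ × ℕ} (hc : c ∈ SkewCells ν μ)
    (hc' : c' ∈ SkewCells ν μ) (h : T c < T c') :
    ReadsBefore (posOf (rlFill g1 g2) (T c)) (posOf (rlFill g1 g2) (T c')) := by
  have hg : posOf (rlFill g1 g2) (T c) ∈ SkewCells g1 g2 := (hT.bijOn_govern hcard).mapsTo hc
  have hg' : posOf (rlFill g1 g2) (T c') ∈ SkewCells g1 g2 := (hT.bijOn_govern hcard).mapsTo hc'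
  rwa [← rlFill_lt_rlFill_iff hg hg', hT.rlFill_govern hcard hc, hT.rlFill_govern hcard hc']

end Governing

section RowRules

variable {ν μ g1 g2 : YoungDiagram} {T : ℕ × ℕ → ℕ} {r i j : ℕ}

lemma row_posOf_mono (hT : T ∈ RWSet ν μ g1 g2) {j' : ℕ} (hj : (i, j) ∈ SkewCells g1 g2)
    (hj' : (i, j') ∈ SkewCells g1 g2) (hle : j ≤ j') :
    (posOf T (rlFill g1 g2 (i, j))).1 ≤ (posOf T (rlFill g1 g2 (i, j'))).1 := by
  induction j', hle using Nat.le_induction with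
  | base => exact le_rfl
  | succ k hk ih =>
    have hmem : (i, k) ∈ SkewCells g1 g2 := by
      rw [mk_mem_skewCells] at hj hj' ⊢; omega
    exact (ih hmem).trans (hT.2.1 i k hmem hj').2

lemma le_row_of_rowCond (hT : T ∈ RWSet ν μ g1 g2) (hR : RowCond r g1 g2 T)
    (hc : (i, j) ∈ SkewCells g1 g2) :
    rowRuleEntry r (i, g2.rowLen i) ≤ (posOf T (rlFill g1 g2 (i, j))).1 + 1 := by
  have hstart : (i, g2.rowLen i) ∈ SkewCells g1 g2 := by
    rw [mk_mem_skewCells] at hc ⊢; omega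
  have := row_posOf_mono hT hstart hc (mk_mem_skewCells.1 hc).1
  have := hR _ hstart
  omega

lemma row_lt_of_revRowCond (hT : T ∈ RWSet ν μ g1 g2) (hR : RevRowCond r g1 g2 T)
    (hc : (i, j) ∈ SkewCells g1 g2) :
    (posOf T (rlFill g1 g2 (i, j))).1 + 1 < rowRuleEntry r (i, g1.rowLen i - 1) := by
  have hend : (i, g1.rowLen i - 1) ∈ SkewCells g1 g2 := by
    rw [mk_mem_skewCells] at hc ⊢; omega
  have := row_posOf_mono hT hc hend (by rw [mk_mem_skewCells] at hc; omega)
  have := hR _ hend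
  omega

end RowRules

section Composition

variable {r : ℕ} {a1 a2 l1 l2 b1 b2 : YoungDiagram} {T1 T2 : ℕ × ℕ → ℕ}

lemma row_add_le_row (hT1 : T1 ∈ RWSet l1 a1 a2 l2) (hR1 : RowCond r a2 l2 T1)
    (hT2 : T2 ∈ RWSet b1 l1 l2 b2) (hR2 : RevRowCond r l2 b2 T2) {x y : ℕ × ℕ}
    (hx : x ∈ SkewCells a2 l2) (hy : y ∈ SkewCells l2 b2) (hyx : y.1 ≤ x.1) :
    (posOf T2 (rlFill l2 b2 y)).1 + (x.1 - y.1) ≤ (posOf T1 (rlFill a2 l2 x)).1 := by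
  obtain ⟨xi, xj⟩ := x
  obtain ⟨yi, yj⟩ := y
  dsimp only at hyx ⊢
  have h1 := le_row_of_rowCond hT1 hR1 hx
  have h2 := row_lt_of_revRowCond hT2 hR2 hy
  have hanti := l2.rowLen_anti _ _ hyx
  have hpos := (mk_mem_skewCells.1 hy).2
  simp only [rowRuleEntry] at h1 h2
  omega

lemma readsBefore_of_row_le (hT1 : T1 ∈ RWSet l1 a1 a2 l2) (hR1 : RowCond r a2 l2 T1)
    (hT2 : T2 ∈ RWSet b1 l1 l2 b2) (hR2 : RevRowCond r l2 b2 T2) {x y : ℕ × ℕ}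
    (hx : x ∈ SkewCells a2 l2) (hy : y ∈ SkewCells l2 b2)
    (hle : (posOf T1 (rlFill a2 l2 x)).1 ≤ (posOf T2 (rlFill l2 b2 y)).1) : ReadsBefore x y := by
  obtain ⟨xi, xj⟩ := x
  obtain ⟨yi, yj⟩ := y
  rcases lt_or_ge xi yi with hxy | hyx
  · exact Or.inl hxy
  have hrow := row_add_le_row hT1 hR1 hT2 hR2 hx hy hyx
  obtain rfl : xi = yi := by dsimp only at hle hrow; omega
  exact Or.inr ⟨rfl, (mk_mem_skewCells.1 hy).2.trans_le (mk_mem_skewCells.1 hx).1⟩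

def composedGovern (a1 l1 a2 l2 b2 : YoungDiagram) (T1 T2 : ℕ × ℕ → ℕ) : ℕ × ℕ → ℕ × ℕ :=
  (SkewCells l1 a1 : Set (ℕ × ℕ)).piecewise (posOf (rlFill a2 l2) ∘ T1)
    (posOf (rlFill l2 b2) ∘ T2)

lemma composedGovern_of_mem_left {c : ℕ × ℕ} (hc : c ∈ SkewCells l1 a1) :
    composedGovern a1 l1 a2 l2 b2 T1 T2 c = posOf (rlFill a2 l2) (T1 c) :=
  Set.piecewise_eq_of_mem _ _ _ hc

lemma composedGovern_of_mem_right {c : ℕ × ℕ} (hc : c ∈ SkewCells b1 l1) :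
    composedGovern a1 l1 a2 l2 b2 T1 T2 c = posOf (rlFill l2 b2) (T2 c) :=
  Set.piecewise_eq_of_notMem _ _ _ (Finset.disjoint_left.1 disjoint_skewCells hc)

section Arrows

variable (h1 : IsQArrow (a1, a2) (l1, l2) T1) (h2 : IsQArrow (l1, l2) (b1, b2) T2)
include h1 h2

lemma skewCells_fst_eq_union :
    SkewCells b1 a1 = SkewCells l1 a1 ∪ SkewCells b1 l1 := by
  rw [Finset.union_comm, skewCells_union h1.2.1 h2.2.1]

lemma skewCells_snd_eq_union :
    SkewCells a2 b2 = SkewCells a2 l2 ∪ SkewCells l2 b2 :=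
  (skewCells_union h2.2.2.1 h1.2.2.1).symm

lemma card_skewCells_comp : (SkewCells b1 a1).card = (SkewCells a2 b2).card := by
  obtain ⟨-, ha1, hl2, hcard1, -⟩ := h1
  obtain ⟨-, hl1, hb2, hcard2, -⟩ := h2
  rw [← card_skewCells_add ha1 hl1, ← card_skewCells_add hb2 hl2, hcard1, hcard2, add_comm]

lemma bijOn_composedGovern :
    BijOn (composedGovern a1 l1 a2 l2 b2 T1 T2) (SkewCells b1 a1) (SkewCells a2 b2) := by
  have ⟨_, _, _, hcard1, hRW1⟩ := h1
  have ⟨_, _, _, hcard2, hRW2⟩ := h2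
  rw [skewCells_fst_eq_union h1 h2, skewCells_snd_eq_union h1 h2, Finset.coe_union,
    Finset.coe_union]
  exact (hRW1.1.bijOn_govern hcard1).piecewise_union (hRW2.1.bijOn_govern hcard2)
    (Finset.disjoint_coe.2 disjoint_skewCells.symm) (Finset.disjoint_coe.2 disjoint_skewCells)

lemma compTab_eqOn : EqOn (compTab a1 l1 b1 a2 l2 b2 T1 T2)
    (rlFill a2 b2 ∘ composedGovern a1 l1 a2 l2 b2 T1 T2) (SkewCells b1 a1) := by
  intro c hc
  rw [Finset.mem_coe, skewCells_fst_eq_union h1 h2, Finset.mem_union] at hc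
  rcases hc with hc | hc
  · simp only [compTab, if_pos hc, Function.comp, composedGovern_of_mem_left hc]
  · simp only [compTab, if_neg (Finset.disjoint_left.1 disjoint_skewCells hc), if_pos hc,
      Function.comp, composedGovern_of_mem_right hc]

lemma compTab_eq_zero {c : ℕ × ℕ} (hc : c ∉ SkewCells b1 a1) :
    compTab a1 l1 b1 a2 l2 b2 T1 T2 c = 0 := by
  rw [skewCells_fst_eq_union h1 h2, Finset.mem_union, not_or] at hc
  simp only [compTab, if_neg hc.1, if_neg hc.2]

lemma bijOn_compTab : BijOn (compTab a1 l1 b1 a2 l2 b2 T1 T2) (SkewCells b1 a1)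
    (Icc 1 (SkewCells b1 a1).card) := by
  have hrl : BijOn (rlFill a2 b2) (SkewCells a2 b2) (Icc 1 (SkewCells b1 a1).card) := by
    rw [card_skewCells_comp h1 h2]
    exact rlFill_bijOn
  exact (hrl.comp (bijOn_composedGovern h1 h2)).congr (compTab_eqOn h1 h2).symm

lemma posOf_compTab_composedGovern {c : ℕ × ℕ} (hc : c ∈ SkewCells b1 a1) :
    posOf (compTab a1 l1 b1 a2 l2 b2 T1 T2)
      (rlFill a2 b2 (composedGovern a1 l1 a2 l2 b2 T1 T2 c)) = c := by
  have hψ := (bijOn_composedGovern h1 h2).mapsTo hc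
  rw [← Function.comp_apply (f := rlFill a2 b2), ← compTab_eqOn h1 h2 hc]
  refine posOf_apply (bijOn_compTab h1 h2).injOn (fun _ => compTab_eq_zero h1 h2) hc ?_
  rw [compTab_eqOn h1 h2 hc]
  exact Nat.one_le_iff_ne_zero.1 (rlFill_bijOn.mapsTo hψ).1

lemma posOf_compTab_of_mem_left {z : ℕ × ℕ} (hz : z ∈ SkewCells a2 l2) :
    posOf (compTab a1 l1 b1 a2 l2 b2 T1 T2) (rlFill a2 b2 z) = posOf T1 (rlFill a2 l2 z) := by
  have ⟨_, _, _, hcard, hRW⟩ := h1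
  have hc : posOf T1 (rlFill a2 l2 z) ∈ SkewCells l1 a1 := hRW.1.mapsTo_cell hcard hz
  have hψ : composedGovern a1 l1 a2 l2 b2 T1 T2 (posOf T1 (rlFill a2 l2 z)) = z := by
    rw [composedGovern_of_mem_left hc]
    exact (hRW.1.invOn_govern hcard).2 hz
  conv_lhs => rw [← hψ]
  exact posOf_compTab_composedGovern h1 h2 (by rw [skewCells_fst_eq_union h1 h2]; simp [hc])

lemma posOf_compTab_of_mem_right {z : ℕ × ℕ} (hz : z ∈ SkewCells l2 b2) :
    posOf (compTab a1 l1 b1 a2 l2 b2 T1 T2) (rlFill a2 b2 z) = posOf T2 (rlFill l2 b2 z) := by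
  have ⟨_, _, _, hcard, hRW⟩ := h2
  have hc : posOf T2 (rlFill l2 b2 z) ∈ SkewCells b1 l1 := hRW.1.mapsTo_cell hcard hz
  have hψ : composedGovern a1 l1 a2 l2 b2 T1 T2 (posOf T2 (rlFill l2 b2 z)) = z := by
    rw [composedGovern_of_mem_right hc]
    exact (hRW.1.invOn_govern hcard).2 hz
  conv_lhs => rw [← hψ]
  exact posOf_compTab_composedGovern h1 h2 (by rw [skewCells_fst_eq_union h1 h2]; simp [hc])

end Arrows

section Path

variable (h1 : IsArrLe r (a1, a2) (l1, l2) T1) (h2 : IsArrGt r (l1, l2) (b1, b2) T2)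
include h1 h2

lemma compTab_lt_compTab {c c' : ℕ × ℕ} (hc : c ∈ SkewCells b1 a1) (hc' : c' ∈ SkewCells b1 a1)
    (hle : c ≤ c') (hT1 : c ∈ SkewCells l1 a1 → c' ∈ SkewCells l1 a1 → T1 c < T1 c')
    (hT2 : c ∈ SkewCells b1 l1 → c' ∈ SkewCells b1 l1 → T2 c < T2 c') :
    compTab a1 l1 b1 a2 l2 b2 T1 T2 c < compTab a1 l1 b1 a2 l2 b2 T1 T2 c' := by
  have hψ := (bijOn_composedGovern h1.1 h2.1).mapsTo
  rw [compTab_eqOn h1.1 h2.1 hc, compTab_eqOn h1.1 h2.1 hc']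
  refine rlFill_lt_rlFill (hψ hc) (hψ hc') ?_
  rw [skewCells_fst_eq_union h1.1 h2.1, Finset.mem_union] at hc hc'
  obtain ⟨⟨-, -, -, hcard1, hRW1⟩, hR1⟩ := h1
  obtain ⟨⟨-, -, -, hcard2, hRW2⟩, hR2⟩ := h2
  rcases hc with hc | hc <;> rcases hc' with hc' | hc'
  · simp only [composedGovern_of_mem_left hc, composedGovern_of_mem_left hc']
    exact hRW1.1.readsBefore_govern hcard1 hc hc' (hT1 hc hc')
  · simp only [composedGovern_of_mem_left hc, composedGovern_of_mem_right hc']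
    refine readsBefore_of_row_le hRW1 hR1 hRW2 hR2 (hRW1.1.bijOn_govern hcard1 |>.mapsTo hc)
      (hRW2.1.bijOn_govern hcard2 |>.mapsTo hc') ?_
    rw [show posOf T1 (rlFill a2 l2 (posOf (rlFill a2 l2) (T1 c))) = c from
        (hRW1.1.invOn_govern hcard1).1 hc,
      show posOf T2 (rlFill l2 b2 (posOf (rlFill l2 b2) (T2 c'))) = c' from
        (hRW2.1.invOn_govern hcard2).1 hc']
    exact (Prod.mk_le_mk.1 hle).1
  · exact absurd hle (not_le_of_mem_skewCells hc hc')
  · simp only [composedGovern_of_mem_right hc, composedGovern_of_mem_right hc']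
    exact hRW2.1.readsBefore_govern hcard2 hc hc' (hT2 hc hc')

lemma isStdFilling_compTab : IsStdFilling b1 a1 (compTab a1 l1 b1 a2 l2 b2 T1 T2) := by
  have ⟨⟨_, _, _, _, hstd1, _⟩, _⟩ := h1
  have ⟨⟨_, _, _, _, hstd2, _⟩, _⟩ := h2
  refine ⟨fun _ => compTab_eq_zero h1.1 h2.1, bijOn_compTab h1.1 h2.1,
    fun i j hc hc' => ?_, fun i j hc hc' => ?_⟩
  · exact compTab_lt_compTab h1 h2 hc hc' (Prod.mk_le_mk.2 ⟨le_rfl, j.le_succ⟩)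
      (hstd1.2.2.1 i j) (hstd2.2.2.1 i j)
  · exact compTab_lt_compTab h1 h2 hc hc' (Prod.mk_le_mk.2 ⟨i.le_succ, le_rfl⟩)
      (hstd1.2.2.2 i j) (hstd2.2.2.2 i j)

lemma row_add_le_and_col_lt {x y : ℕ × ℕ} (hx : x ∈ SkewCells a2 l2) (hy : y ∈ SkewCells l2 b2)
    (hyx : y.1 ≤ x.1) :
    (posOf T2 (rlFill l2 b2 y)).1 + (x.1 - y.1) ≤ (posOf T1 (rlFill a2 l2 x)).1 ∧
      (posOf T1 (rlFill a2 l2 x)).2 < (posOf T2 (rlFill l2 b2 y)).2 := by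
  obtain ⟨⟨-, -, -, hcard1, hRW1⟩, hR1⟩ := h1
  obtain ⟨⟨-, -, -, hcard2, hRW2⟩, hR2⟩ := h2
  have hrow := row_add_le_row hRW1 hR1 hRW2 hR2 hx hy hyx
  dsimp only at hrow
  refine ⟨hrow, snd_lt_snd_of_mem_of_notMem (μ := l1) ?_ ?_ (by omega)⟩
  · exact (mem_skewCells.1 (hRW1.1.mapsTo_cell hcard1 hx)).1
  · exact (mem_skewCells.1 (hRW2.1.mapsTo_cell hcard2 hy)).2

lemma compTab_mem_RWSet : compTab a1 l1 b1 a2 l2 b2 T1 T2 ∈ RWSet b1 a1 a2 b2 := by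
  have ⟨⟨_, _, _, _, hRW1⟩, _⟩ := h1
  have ⟨⟨_, _, _, _, hRW2⟩, _⟩ := h2
  refine ⟨isStdFilling_compTab h1 h2, fun i j hz hz' => ?_, fun i j hz hz' => ?_⟩ <;>
  rw [skewCells_snd_eq_union h1.1 h2.1, Finset.mem_union] at hz hz' <;>
  rcases hz with hz | hz <;> rcases hz' with hz' | hz'
  · rw [posOf_compTab_of_mem_left h1.1 h2.1 hz, posOf_compTab_of_mem_left h1.1 h2.1 hz']
    exact hRW1.2.1 i j hz hz'
  · exact absurd (Prod.mk_le_mk.2 ⟨le_rfl, j.le_succ⟩) (not_le_of_mem_skewCells hz hz')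
  · rw [posOf_compTab_of_mem_right h1.1 h2.1 hz, posOf_compTab_of_mem_left h1.1 h2.1 hz']
    obtain ⟨hrow, hcol⟩ := row_add_le_and_col_lt h1 h2 hz' hz le_rfl
    exact ⟨hcol, by simpa using hrow⟩
  · rw [posOf_compTab_of_mem_right h1.1 h2.1 hz, posOf_compTab_of_mem_right h1.1 h2.1 hz']
    exact hRW2.2.1 i j hz hz'
  · rw [posOf_compTab_of_mem_left h1.1 h2.1 hz, posOf_compTab_of_mem_left h1.1 h2.1 hz']
    exact hRW1.2.2 i j hz hz'
  · exact absurd (Prod.mk_le_mk.2 ⟨i.le_succ, le_rfl⟩) (not_le_of_mem_skewCells hz hz')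
  · rw [posOf_compTab_of_mem_right h1.1 h2.1 hz, posOf_compTab_of_mem_left h1.1 h2.1 hz']
    obtain ⟨hrow, hcol⟩ := row_add_le_and_col_lt h1 h2 hz' hz i.le_succ
    exact ⟨by simp only at hrow; omega, hcol.le⟩
  · rw [posOf_compTab_of_mem_right h1.1 h2.1 hz, posOf_compTab_of_mem_right h1.1 h2.1 hz']
    exact hRW2.2.2 i j hz hz'

end Path

end Composition

end RW

open RW in
theorem arrows_composable_general (r : ℕ) (a1 a2 l1 l2 b1 b2 : YoungDiagram)
    (T1 T2 : ℕ × ℕ → ℕ)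
    (h1 : IsArrLe r (a1, a2) (l1, l2) T1) (h2 : IsArrGt r (l1, l2) (b1, b2) T2) :
    IsQArrow (a1, a2) (b1, b2) (compTab a1 l1 b1 a2 l2 b2 T1 T2) := by
  refine ⟨?_, h1.1.2.1.trans h2.1.2.1, h2.1.2.2.1.trans h1.1.2.2.1, card_skewCells_comp h1.1 h2.1,
    compTab_mem_RWSet h1 h2⟩
  obtain ⟨c, hc⟩ := h1.1.skewCells_nonempty
  intro hab
  exact (mem_skewCells.1 hc).2 ((Prod.mk.inj hab).1 ▸ h2.1.2.1 (mem_skewCells.1 hc).1)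

open RW in
/-- A path consisting of an arrow satisfying the `r`-th row rule
followed by an arrow satisfying the reverse `r`-th row rule is composable: the
composition tableau is a standard tableau of shape `β1/α1` lying in
`RW_{β1/α1}(α2/β2)`, hence defines an arrow `(α1,α2) → (β1,β2)` of the quiver. -/
theorem arrows_composable (r : ℕ) (hr : 0 < r) (a1 a2 l1 l2 b1 b2 : YoungDiagram)
    (T1 T2 : ℕ × ℕ → ℕ)
    (h1 : IsArrLe r (a1, a2) (l1, l2) T1) (h2 : IsArrGt r (l1, l2) (b1, b2) T2) :
    IsQArrow (a1, a2) (b1, b2) (compTab a1 l1 b1 a2 l2 b2 T1 T2) :=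
  arrows_composable_general r a1 a2 l1 l2 b1 b2 T1 T2 h1 h2

end
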